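/- arXiv:1309.1195 — 3 statements merged into one kernel-verified Lean document; each statement's English description precedes it below -/
import Mathlib

section
/- Let G be a group, Z(G) its center, and σ : G → G an anti-holomorphic involution modeled abstractly as a group automorphism with σ² = id (composition with conjugation of the coefficient field being immaterial at the group level). Let φ : Γ → G be a group homomorphism that is simple, meaning every g ∈ G with Ad_g ∘ φ = φ lies in Z(G). Suppose σ ∘ φ = Ad_g ∘ φ for some g ∈ G. Then σ(g) · g ∈ Z(G), and the map σ' = Ad_{g^{-1}} ∘ σ satisfies σ' ∘ φ = φ and (σ')² = Ad_{(σ(g)g)^{-1}}; in particular if additionally σ(g)g = e then σ' is an involution fixing φ pointwise. -/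
/-!
Since `σ² = id`, the square of `σ' = Ad_{g⁻¹} ∘ σ` is conjugation by `(σ g * g)⁻¹`. As `σ'` fixes
each `φ γ`, so does its square; hence `σ g * g` centralises the image of `φ`, and simplicity puts
it in the centre.
-/

section InvolutiveEndomorphism

variable {G : Type*} [Group G] (σ : G →* G) (hσ : ∀ x : G, σ (σ x) = x)
include hσ

theorem inv_mul_map_inv_mul_map_mul_mul (g x : G) :
    g⁻¹ * σ (g⁻¹ * σ x * g) * g = (σ g * g)⁻¹ * x * (σ g * g) := by
  simp only [map_mul, map_inv, hσ]
  group

theorem commute_map_mul_of_map_eq_conj {g y : G} (hy : σ y = g * y * g⁻¹) :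
    Commute (σ g * g) y := by
  have hy' : g⁻¹ * σ y * g = y := by rw [hy]; group
  have h := inv_mul_map_inv_mul_map_mul_mul σ hσ g y
  rw [hy', hy', eq_comm, mul_assoc, inv_mul_eq_iff_eq_mul] at h
  exact h.symm

end InvolutiveEndomorphism

/-- If `φ : Γ → G` is a simple homomorphism and `σ ∘ φ = Ad_g ∘ φ` for an
involutive automorphism `σ` of `G`, then `σ(g)·g ∈ Z(G)`, and `σ' = Ad_{g⁻¹} ∘ σ` fixes `φ`
pointwise with `(σ')² = Ad_{(σ(g)g)⁻¹}`; in particular when `σ(g)g = e` the map `σ'` is an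
involution fixing `φ`. -/
theorem stmt7 {G Γ : Type*} [Group G] [Group Γ]
    (σ : G →* G) (hσ2 : ∀ x : G, σ (σ x) = x)
    (φ : Γ →* G)
    (hsimple : ∀ g : G, (∀ γ : Γ, g * φ γ * g⁻¹ = φ γ) → g ∈ Subgroup.center G)
    (g : G) (hfix : ∀ γ : Γ, σ (φ γ) = g * φ γ * g⁻¹) :
    σ g * g ∈ Subgroup.center G ∧
    (∀ γ : Γ, g⁻¹ * σ (φ γ) * g = φ γ) ∧
    (∀ x : G, g⁻¹ * σ (g⁻¹ * σ x * g) * g = (σ g * g)⁻¹ * x * (σ g * g)) ∧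
    (σ g * g = 1 → ∀ x : G, g⁻¹ * σ (g⁻¹ * σ x * g) * g = x) := by
  have hsquare := inv_mul_map_inv_mul_map_mul_mul σ hσ2 g
  refine ⟨hsimple _ fun γ => (commute_map_mul_of_map_eq_conj σ hσ2 (hfix γ)).mul_inv_cancel,
    fun γ => by rw [hfix γ]; group, hsquare, fun h x => by rw [hsquare, h]; group⟩
end

section
/- Let G be a group, φ : Γ → G a simple homomorphism (every g with Ad_g ∘ φ = φ lies in Z(G)), and f* : Γ → Γ an automorphism-like map with f*² = Ad_μ for a fixed μ ∈ Γ and f*(μ) = μ. Suppose φ ∘ f* = Ad_u ∘ φ for some u ∈ G. Then c := u² · φ(μ)^{-1} lies in Z(G). Moreover, if u is replaced by uv for v ∈ Z(G), then c is replaced by c·v², so the class of c in Z(G)/{v² : v ∈ Z(G)} is independent of the choice of u. -/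
/-!
Applying `φ ∘ f* = Ad_u ∘ φ` twice and `f*² = Ad_μ` gives `Ad_{u²} ∘ φ = Ad_{φ μ} ∘ φ`, so
`u² φ(μ)⁻¹` centralizes the image of `φ` and simplicity puts it in the centre. For central `v`,
`(u v)² = u² v²` and `v²` commutes with `φ(μ)⁻¹`.
-/

section Conjugation

variable {G Γ : Type*} [Group G] [Group Γ]

theorem conj_sq_apply_of_comp_eq_conj (φ : Γ →* G) {fs : Γ →* Γ} {μ : Γ}
    (hfs2 : ∀ x : Γ, fs (fs x) = μ * x * μ⁻¹) {u : G}
    (hu : ∀ γ : Γ, φ (fs γ) = u * φ γ * u⁻¹) (γ : Γ) :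
    u ^ 2 * φ γ * (u ^ 2)⁻¹ = φ μ * φ γ * (φ μ)⁻¹ := by
  have h := hu (fs γ)
  rw [hfs2, hu γ] at h
  simp only [map_mul, map_inv] at h
  rw [h, sq]
  group

theorem mul_inv_conj_apply_eq_self (φ : Γ →* G) {μ : Γ} {a : G}
    (ha : ∀ γ : Γ, a * φ γ * a⁻¹ = φ μ * φ γ * (φ μ)⁻¹) (γ : Γ) :
    a * (φ μ)⁻¹ * φ γ * (a * (φ μ)⁻¹)⁻¹ = φ γ := by
  have h := ha (μ⁻¹ * γ * μ)
  simp only [map_mul, map_inv] at h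
  calc a * (φ μ)⁻¹ * φ γ * (a * (φ μ)⁻¹)⁻¹ = a * ((φ μ)⁻¹ * φ γ * φ μ) * a⁻¹ := by group
    _ = φ γ := by rw [h]; group

end Conjugation

theorem mul_pow_two_mul_eq_of_mem_center {G : Type*} [Group G] (u x : G) {v : G}
    (hv : v ∈ Subgroup.center G) :
    (u * v) ^ 2 * x = u ^ 2 * x * v ^ 2 := by
  have huv : Commute u v := Subgroup.mem_center_iff.mp hv u
  have hv2 : v ^ 2 ∈ Subgroup.center G := pow_mem hv 2
  rw [huv.mul_pow, mul_assoc, mul_assoc, Subgroup.mem_center_iff.mp hv2 x]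

theorem stmt8_general {G Γ : Type*} [Group G] [Group Γ]
    (φ : Γ →* G)
    (hsimple : ∀ g : G, (∀ γ : Γ, g * φ γ * g⁻¹ = φ γ) → g ∈ Subgroup.center G)
    (fs : Γ →* Γ) (μ : Γ)
    (hfs2 : ∀ x : Γ, fs (fs x) = μ * x * μ⁻¹)
    (u : G) (hu : ∀ γ : Γ, φ (fs γ) = u * φ γ * u⁻¹) :
    u ^ 2 * (φ μ)⁻¹ ∈ Subgroup.center G ∧
    ∀ v ∈ Subgroup.center G, (u * v) ^ 2 * (φ μ)⁻¹ = u ^ 2 * (φ μ)⁻¹ * v ^ 2 :=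
  ⟨hsimple _ (mul_inv_conj_apply_eq_self φ (conj_sq_apply_of_comp_eq_conj φ hfs2 hu)),
    fun _ hv => mul_pow_two_mul_eq_of_mem_center u _ hv⟩

/-- For a simple homomorphism `φ : Γ → G`, an automorphism `f*` of `Γ` with
`f*² = Ad_μ`, `f*(μ) = μ`, and `φ ∘ f* = Ad_u ∘ φ`, the element `c = u²·φ(μ)⁻¹` is central,
and replacing `u` by `uv` with `v` central replaces `c` by `c·v²`. -/
theorem stmt8 {G Γ : Type*} [Group G] [Group Γ]
    (φ : Γ →* G)
    (hsimple : ∀ g : G, (∀ γ : Γ, g * φ γ * g⁻¹ = φ γ) → g ∈ Subgroup.center G)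
    (fs : Γ →* Γ) (μ : Γ)
    (hfs2 : ∀ x : Γ, fs (fs x) = μ * x * μ⁻¹) (hfsμ : fs μ = μ)
    (u : G) (hu : ∀ γ : Γ, φ (fs γ) = u * φ γ * u⁻¹) :
    u ^ 2 * (φ μ)⁻¹ ∈ Subgroup.center G ∧
    ∀ v ∈ Subgroup.center G, (u * v) ^ 2 * (φ μ)⁻¹ = u ^ 2 * (φ μ)⁻¹ * v ^ 2 :=
  stmt8_general φ hsimple fs μ hfs2 u hu
end

section
/- Let G be a group with an automorphism σ satisfying σ² = id, let Γ be a group with automorphism f* satisfying f*² = Ad_μ and f*(μ) = μ, and let φ : Γ → G be a simple homomorphism (every g with Ad_g ∘ φ = φ lies in Z(G)). Suppose σ ∘ φ ∘ f* = Ad_{σ(u)} ∘ φ for some u ∈ G. Then c := u·σ(u)·φ(μ)^{-1} lies in Z(G) and satisfies σ(c) = c. Replacing u by uv for v ∈ Z(G) replaces c by c·v·σ(v), so the class of c in {c ∈ Z(G) : σ(c) = c}/{v·σ(v) : v ∈ Z(G)} is well defined. -/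
/-!
Applying `σ` to the twisting relation gives `φ (f* γ) = u σ(φ γ) u⁻¹`; iterating it and comparing
with `f*² = Ad_μ` shows that `u σ(u)` and `φ μ` induce the same conjugation on the image of `φ`,
so simplicity makes `c = u σ(u) (φ μ)⁻¹` central. Evaluating the twisting relation at `μ = f* μ`
gives `σ c = σ(u) c σ(u)⁻¹ = c`.
-/

open Subgroup

section Center

variable {G : Type*} [Group G]

lemma conj_eq_of_mem_center {z : G} (hz : z ∈ center G) (g : G) : g * z * g⁻¹ = z := by
  rw [mem_center_iff.mp hz g, mul_inv_cancel_right]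

lemma apply_mem_center_of_involutive {σ : G →* G} (hσ2 : ∀ x : G, σ (σ x) = x) {v : G}
    (hv : v ∈ center G) : σ v ∈ center G := by
  refine mem_center_iff.mpr fun g => ?_
  rw [← hσ2 g, ← map_mul, ← map_mul, mem_center_iff.mp hv]

lemma mul_mul_mul_mul_of_mem_center {v w : G} (hv : v ∈ center G) (hw : w ∈ center G)
    (a b c : G) : a * v * (b * w) * c = a * b * c * (v * w) := by
  simp only [mul_assoc, ← mem_center_iff.mp hw c]
  rw [← mul_assoc v, ← mem_center_iff.mp hv b, mul_assoc b, ← mul_assoc v,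
    ← mem_center_iff.mp hv c]
  simp only [mul_assoc]

end Center

section Twisted

variable {G Γ : Type*} [Group G] [Group Γ] {σ : G →* G} {fs : Γ →* Γ} {φ : Γ →* G} {u : G}

lemma apply_fs_eq_conj (hσ2 : ∀ x : G, σ (σ x) = x)
    (hu : ∀ γ : Γ, σ (φ (fs γ)) = σ u * φ γ * (σ u)⁻¹) (γ : Γ) :
    φ (fs γ) = u * σ (φ γ) * u⁻¹ := by
  simpa only [map_mul, map_inv, hσ2] using congrArg σ (hu γ)

lemma conj_mul_apply_eq_conj_apply (hσ2 : ∀ x : G, σ (σ x) = x) {μ : Γ}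
    (hfs2 : ∀ x : Γ, fs (fs x) = μ * x * μ⁻¹)
    (hu : ∀ γ : Γ, σ (φ (fs γ)) = σ u * φ γ * (σ u)⁻¹) (γ : Γ) :
    u * σ u * φ γ * (u * σ u)⁻¹ = φ μ * φ γ * (φ μ)⁻¹ :=
  calc u * σ u * φ γ * (u * σ u)⁻¹ = u * (σ u * φ γ * (σ u)⁻¹) * u⁻¹ := by group
    _ = φ (fs (fs γ)) := by rw [← hu, apply_fs_eq_conj hσ2 hu (fs γ)]
    _ = φ μ * φ γ * (φ μ)⁻¹ := by rw [hfs2, map_mul, map_mul, map_inv]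

lemma mul_mul_inv_mem_center (hσ2 : ∀ x : G, σ (σ x) = x) {μ : Γ}
    (hfs2 : ∀ x : Γ, fs (fs x) = μ * x * μ⁻¹)
    (hsimple : ∀ g : G, (∀ γ : Γ, g * φ γ * g⁻¹ = φ γ) → g ∈ center G)
    (hu : ∀ γ : Γ, σ (φ (fs γ)) = σ u * φ γ * (σ u)⁻¹) :
    u * σ u * (φ μ)⁻¹ ∈ center G := by
  refine hsimple _ fun γ => ?_
  have key := conj_mul_apply_eq_conj_apply hσ2 hfs2 hu (μ⁻¹ * γ * μ)
  simp only [map_mul, map_inv] at key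
  calc u * σ u * (φ μ)⁻¹ * φ γ * (u * σ u * (φ μ)⁻¹)⁻¹
      = u * σ u * ((φ μ)⁻¹ * φ γ * φ μ) * (u * σ u)⁻¹ := by group
    _ = φ γ := by rw [key]; group

lemma apply_mul_mul_inv_eq_self (hσ2 : ∀ x : G, σ (σ x) = x) {μ : Γ} (hfsμ : fs μ = μ)
    (hu : ∀ γ : Γ, σ (φ (fs γ)) = σ u * φ γ * (σ u)⁻¹) (hc : u * σ u * (φ μ)⁻¹ ∈ center G) :
    σ (u * σ u * (φ μ)⁻¹) = u * σ u * (φ μ)⁻¹ := by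
  have hμ := hu μ
  rw [hfsμ] at hμ
  calc σ (u * σ u * (φ μ)⁻¹) = σ u * (u * σ u * (φ μ)⁻¹) * (σ u)⁻¹ := by
        rw [map_mul, map_mul, map_inv, hσ2, hμ]; group
    _ = u * σ u * (φ μ)⁻¹ := conj_eq_of_mem_center hc _

end Twisted

/-- For a simple homomorphism `φ : Γ → G`, an involutive automorphism `σ` of
`G`, an automorphism `f*` of `Γ` with `f*² = Ad_μ`, `f*(μ) = μ`, and
`σ ∘ φ ∘ f* = Ad_{σ(u)} ∘ φ`, the element `c = u·σ(u)·φ(μ)⁻¹` is central and `σ`-fixed,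
and replacing `u` by `uv` with `v` central replaces `c` by `c·v·σ(v)`. -/
theorem stmt9 {G Γ : Type*} [Group G] [Group Γ]
    (σ : G →* G) (hσ2 : ∀ x : G, σ (σ x) = x)
    (fs : Γ →* Γ) (μ : Γ)
    (hfs2 : ∀ x : Γ, fs (fs x) = μ * x * μ⁻¹) (hfsμ : fs μ = μ)
    (φ : Γ →* G)
    (hsimple : ∀ g : G, (∀ γ : Γ, g * φ γ * g⁻¹ = φ γ) → g ∈ Subgroup.center G)
    (u : G) (hu : ∀ γ : Γ, σ (φ (fs γ)) = σ u * φ γ * (σ u)⁻¹) :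
    u * σ u * (φ μ)⁻¹ ∈ Subgroup.center G ∧
    σ (u * σ u * (φ μ)⁻¹) = u * σ u * (φ μ)⁻¹ ∧
    ∀ v ∈ Subgroup.center G,
      (u * v) * σ (u * v) * (φ μ)⁻¹ = u * σ u * (φ μ)⁻¹ * (v * σ v) := by
  have hc := mul_mul_inv_mem_center hσ2 hfs2 hsimple hu
  refine ⟨hc, apply_mul_mul_inv_eq_self hσ2 hfsμ hu hc, fun v hv => ?_⟩
  rw [map_mul]
  exact mul_mul_mul_mul_of_mem_center hv (apply_mem_center_of_involutive hσ2 hv) _ _ _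
end
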